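/- arXiv:1007.0950 — 5 statements merged into one kernel-verified Lean document; each statement's English description precedes it below -/
import Mathlib

section
/- Let N ≥ 1, let D = diag(d_1, …, d_N) be a real diagonal N×N matrix with d_i > 0 for all i, and let B be a real N×N matrix with nonnegative entries such that ρ(B) > 0. Define Φ(λ) = ρ(λ²D + B)/λ for λ > 0, where ρ denotes the spectral radius. Then Φ attains a minimum on (0, ∞): there exists λ* ∈ (0, ∞) with Φ(λ*) = inf_{λ>0} Φ(λ) > 0. -/
/-- The spectral radius of a real square matrix: the supremum of the absolute
values of its complex eigenvalues (roots of the characteristic polynomial over ℂ). -/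
noncomputable def specRad {N : ℕ} (A : Matrix (Fin N) (Fin N) ℝ) : ℝ :=
  sSup {x : ℝ | ∃ μ : ℂ, (A.map (fun r => (r : ℂ))).charpoly.IsRoot μ ∧ x = ‖μ‖}

/-!
Write `g t = ρ(t • D + B)` with `D = diagonal d`. The spectral radius is monotone on entrywise
nonnegative matrices (Gelfand's formula with a norm that is monotone in the entries), so `g` is
nondecreasing and `g t / t = ρ(D + t⁻¹ • B)` is nonincreasing; hence `g s ≤ g t ≤ (t / s) g s`
for `s ≤ t`, and `g` is continuous.
The bounds `ρ(B) / λ ≤ Φ λ` and `λ ρ(D) ≤ Φ λ` make `Φ λ = g (λ²) / λ` tend to `∞` at both ends of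
`(0, ∞)`, so `Φ` attains its minimum there, and the first bound makes the minimum positive.
-/

open Filter Topology Set Matrix
open scoped Pointwise

theorem continuousAt_of_monotoneOn_of_antitoneOn_div {g : ℝ → ℝ} (hmono : MonotoneOn g (Ioi 0))
    (hanti : AntitoneOn (fun t => g t / t) (Ioi 0)) {x : ℝ} (hx : 0 < x) : ContinuousAt g x := by
  refine continuousAt_of_locally_lipschitz hx (|g x| / x) fun y hy => ?_
  rw [Real.dist_eq] at hy
  have hy0 : 0 < y := by linarith [(abs_lt.1 hy).1]
  rw [Real.dist_eq, Real.dist_eq, div_mul_eq_mul_div, le_div_iff₀ hx]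
  rcases le_total x y with hxy | hyx
  · have h1 := hmono hx hy0 hxy
    have h2 := (div_le_div_iff₀ hy0 hx).1 (hanti hx hy0 hxy)
    rw [abs_of_nonneg (sub_nonneg.2 h1), abs_of_nonneg (sub_nonneg.2 hxy)]
    nlinarith [le_abs_self (g x)]
  · have h1 := hmono hy0 hx hyx
    have h2 := (div_le_div_iff₀ hx hy0).1 (hanti hy0 hx hyx)
    rw [abs_of_nonpos (sub_nonpos.2 h1), abs_of_nonpos (sub_nonpos.2 hyx)]
    nlinarith [le_abs_self (g x)]

theorem exists_isMinOn_Ioi_of_tendsto_atTop {f : ℝ → ℝ} (hf : ContinuousOn f (Ioi 0))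
    (h0 : Tendsto f (𝓝[>] 0) atTop) (hinf : Tendsto f atTop atTop) :
    ∃ x ∈ Ioi 0, IsMinOn f (Ioi 0) x := by
  have hcont : Continuous (f ∘ Real.exp) :=
    hf.comp_continuous Real.continuous_exp Real.exp_pos
  have hcoercive : Tendsto (f ∘ Real.exp) (cocompact ℝ) atTop := by
    rw [cocompact_eq_atBot_atTop, tendsto_sup]
    exact ⟨h0.comp Real.tendsto_exp_atBot_nhdsGT, hinf.comp Real.tendsto_exp_atTop⟩
  obtain ⟨u, hu⟩ := hcont.exists_forall_le hcoercive
  refine ⟨Real.exp u, Real.exp_pos u, fun y hy => ?_⟩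
  simpa [Real.exp_log (mem_Ioi.1 hy)] using hu (Real.log y)

namespace Matrix

variable {ι R : Type*} [Fintype ι] [DecidableEq ι] [Semiring R] [PartialOrder R] [IsOrderedRing R]

theorem pow_apply_le_pow_apply {A C : Matrix ι ι R} (hA : ∀ i j, 0 ≤ A i j)
    (hAC : ∀ i j, A i j ≤ C i j) (n : ℕ) (i j : ι) : (A ^ n) i j ≤ (C ^ n) i j := by
  induction n generalizing j with
  | zero => rfl
  | succ n ih =>
    rw [pow_succ, pow_succ, mul_apply, mul_apply]
    exact Finset.sum_le_sum fun k _ =>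
      mul_le_mul (ih k) (hAC k j) (hA k j) ((pow_apply_nonneg hA n i k).trans (ih k))

end Matrix

section Gelfand

attribute [local instance] Matrix.linftyOpNormedAddCommGroup Matrix.linftyOpNormedRing
  Matrix.linftyOpNormedAlgebra

variable {ι : Type*} [Fintype ι] [DecidableEq ι]

theorem linfty_opNNNorm_map_ofReal_le {A C : Matrix ι ι ℝ} (hA : ∀ i j, 0 ≤ A i j)
    (hAC : ∀ i j, A i j ≤ C i j) : ‖A.map Complex.ofReal‖₊ ≤ ‖C.map Complex.ofReal‖₊ := by
  rw [linfty_opNNNorm_def, linfty_opNNNorm_def]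
  refine Finset.sup_mono_fun fun i _ => Finset.sum_le_sum fun j _ => ?_
  rw [← NNReal.coe_le_coe, coe_nnnorm, coe_nnnorm, map_apply, map_apply, Complex.norm_real,
    Complex.norm_real, Real.norm_of_nonneg (hA i j), Real.norm_of_nonneg ((hA i j).trans (hAC i j))]
  exact hAC i j

theorem spectralRadius_map_ofReal_mono {A C : Matrix ι ι ℝ} (hA : ∀ i j, 0 ≤ A i j)
    (hAC : ∀ i j, A i j ≤ C i j) :
    spectralRadius ℂ (A.map Complex.ofReal) ≤ spectralRadius ℂ (C.map Complex.ofReal) := by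
  have gelfand (M : Matrix ι ι ℝ) :
      Tendsto (fun n : ℕ => (‖(M ^ n).map Complex.ofReal‖₊ : ENNReal) ^ (1 / n : ℝ)) atTop
        (𝓝 (spectralRadius ℂ (M.map Complex.ofReal))) := by
    have h := spectrum.pow_nnnorm_pow_one_div_tendsto_nhds_spectralRadius
      (Complex.ofRealHom.mapMatrix M)
    simp_rw [← map_pow] at h
    exact h
  refine le_of_tendsto_of_tendsto' (gelfand A) (gelfand C) fun n => ?_
  gcongr
  exact linfty_opNNNorm_map_ofReal_le (pow_apply_nonneg hA n) (pow_apply_le_pow_apply hA hAC n)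

end Gelfand

section SpecRad

variable {N : ℕ}

theorem specRad_eq_sSup_norm_spectrum (A : Matrix (Fin N) (Fin N) ℝ) :
    specRad A = sSup ((‖·‖) '' spectrum ℂ (A.map Complex.ofReal)) := by
  simp only [specRad, Matrix.mem_spectrum_iff_isRoot_charpoly, image, eq_comm]

theorem norm_le_specRad {A : Matrix (Fin N) (Fin N) ℝ} {μ : ℂ}
    (hμ : μ ∈ spectrum ℂ (A.map Complex.ofReal)) : ‖μ‖ ≤ specRad A := by
  rw [specRad_eq_sSup_norm_spectrum]
  exact le_csSup ((Matrix.finite_spectrum _).image _).bddAbove (mem_image_of_mem _ hμ)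

theorem specRad_nonneg (A : Matrix (Fin N) (Fin N) ℝ) : 0 ≤ specRad A := by
  rw [specRad_eq_sSup_norm_spectrum]
  exact Real.sSup_nonneg (by rintro _ ⟨μ, -, rfl⟩; exact norm_nonneg μ)

theorem spectralRadius_map_ofReal_le (A : Matrix (Fin N) (Fin N) ℝ) :
    spectralRadius ℂ (A.map Complex.ofReal) ≤ ENNReal.ofReal (specRad A) :=
  iSup₂_le fun μ hμ =>
    (ofReal_norm μ).symm.trans_le (ENNReal.ofReal_le_ofReal (norm_le_specRad hμ))

theorem specRad_mono {A C : Matrix (Fin N) (Fin N) ℝ} (hA : ∀ i j, 0 ≤ A i j)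
    (hAC : ∀ i j, A i j ≤ C i j) : specRad A ≤ specRad C := by
  rw [specRad_eq_sSup_norm_spectrum A]
  refine Real.sSup_le ?_ (specRad_nonneg C)
  rintro _ ⟨μ, hμ, rfl⟩
  rw [← ENNReal.ofReal_le_ofReal_iff (specRad_nonneg C)]
  calc ENNReal.ofReal ‖μ‖ = ‖μ‖₊ := ofReal_norm μ
    _ ≤ spectralRadius ℂ (A.map Complex.ofReal) := le_iSup₂ (α := ENNReal) μ hμ
    _ ≤ spectralRadius ℂ (C.map Complex.ofReal) := spectralRadius_map_ofReal_mono hA hAC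
    _ ≤ ENNReal.ofReal (specRad C) := spectralRadius_map_ofReal_le C

theorem specRad_smul {c : ℝ} (hc : 0 < c) (A : Matrix (Fin N) (Fin N) ℝ) :
    specRad (c • A) = c * specRad A := by
  have hspec : spectrum ℂ ((c • A).map Complex.ofReal)
      = (c : ℂ) • spectrum ℂ (A.map Complex.ofReal) := by
    have := spectrum.unit_smul_eq_smul (A.map Complex.ofReal)
      (Units.mk0 (c : ℂ) (Complex.ofReal_ne_zero.2 hc.ne'))
    simpa [Matrix.map_smul', Units.smul_def] using this
  rw [specRad_eq_sSup_norm_spectrum, specRad_eq_sSup_norm_spectrum, hspec, ← smul_eq_mul,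
    ← Real.sSup_smul_of_nonneg hc.le, ← image_smul, ← image_smul, image_image, image_image]
  simp [abs_of_pos hc]

theorem le_specRad_diagonal {d : Fin N → ℝ} (i : Fin N) : d i ≤ specRad (diagonal d) := by
  have := norm_le_specRad (A := diagonal d) (μ := d i) (by simp [diagonal_map])
  rw [Complex.norm_real, Real.norm_eq_abs] at this
  exact (le_abs_self _).trans this

end SpecRad

section SmulAdd

variable {N : ℕ} {D B : Matrix (Fin N) (Fin N) ℝ}
  (hD : ∀ i j, 0 ≤ D i j) (hB : ∀ i j, 0 ≤ B i j)
include hD hB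

theorem specRad_smul_add_smul_mono {a a' b b' : ℝ} (ha : 0 ≤ a) (haa' : a ≤ a') (hb : 0 ≤ b)
    (hbb' : b ≤ b') : specRad (a • D + b • B) ≤ specRad (a' • D + b' • B) := by
  refine specRad_mono (fun i j => ?_) (fun i j => ?_)
  · simp only [Matrix.add_apply, Matrix.smul_apply, smul_eq_mul]
    have := hD i j; have := hB i j
    positivity
  · simp only [Matrix.add_apply, Matrix.smul_apply, smul_eq_mul]
    gcongr
    exacts [hD i j, hB i j]

theorem monotoneOn_specRad_smul_add : MonotoneOn (fun t : ℝ => specRad (t • D + B)) (Ici 0) :=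
  fun s hs t _ hst => by
    simpa only [one_smul] using
      specRad_smul_add_smul_mono hD hB (mem_Ici.1 hs) hst zero_le_one le_rfl

theorem antitoneOn_specRad_smul_add_div :
    AntitoneOn (fun t : ℝ => specRad (t • D + B) / t) (Ioi 0) := by
  have key {t : ℝ} (ht : 0 < t) : specRad (t • D + B) / t = specRad ((1 : ℝ) • D + t⁻¹ • B) := by
    rw [div_eq_inv_mul, ← specRad_smul (inv_pos.2 ht), smul_add, smul_smul,
      inv_mul_cancel₀ ht.ne']
  intro s hs t ht hst
  simp only [key hs, key ht]
  exact specRad_smul_add_smul_mono hD hB zero_le_one le_rfl (inv_nonneg.2 (le_of_lt ht))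
    (inv_anti₀ hs hst)

theorem specRad_le_specRad_smul_add {t : ℝ} (ht : 0 ≤ t) : specRad B ≤ specRad (t • D + B) := by
  simpa using specRad_smul_add_smul_mono hD hB le_rfl ht zero_le_one le_rfl

theorem mul_specRad_le_specRad_smul_add {t : ℝ} (ht : 0 < t) :
    t * specRad D ≤ specRad (t • D + B) := by
  simpa [specRad_smul ht] using specRad_smul_add_smul_mono hD hB ht.le le_rfl le_rfl zero_le_one

theorem exists_isMinOn_specRad_sq_smul_add_div (hρD : 0 < specRad D) (hρB : 0 < specRad B) :
    ∃ lam ∈ Ioi 0, IsMinOn (fun μ : ℝ => specRad ((μ ^ 2) • D + B) / μ) (Ioi 0) lam := by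
  refine exists_isMinOn_Ioi_of_tendsto_atTop (fun x hx => ?_) ?_ ?_
  · have hg := continuousAt_of_monotoneOn_of_antitoneOn_div
      ((monotoneOn_specRad_smul_add hD hB).mono Ioi_subset_Ici_self)
      (antitoneOn_specRad_smul_add_div hD hB) (pow_pos hx 2)
    have hcomp : ContinuousAt (fun μ : ℝ => specRad ((μ ^ 2) • D + B)) x :=
      hg.comp (f := fun μ : ℝ => μ ^ 2) (continuous_pow 2).continuousAt
    exact (hcomp.div continuousAt_id (ne_of_gt hx)).continuousWithinAt
  · refine tendsto_atTop_mono' _ ?_ (tendsto_inv_nhdsGT_zero.const_mul_atTop hρB)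
    filter_upwards [self_mem_nhdsWithin] with x hx
    rw [← div_eq_mul_inv]
    exact div_le_div_of_nonneg_right (specRad_le_specRad_smul_add hD hB (sq_nonneg x)) hx.le
  · refine tendsto_atTop_mono' _ ?_ (tendsto_id.atTop_mul_const hρD)
    filter_upwards [eventually_gt_atTop 0] with x hx
    rw [le_div_iff₀ hx]
    calc id x * specRad D * x = x ^ 2 * specRad D := by rw [id]; ring
      _ ≤ _ := mul_specRad_le_specRad_smul_add hD hB (pow_pos hx 2)

end SmulAdd

theorem stmt_2 (N : ℕ) (hN : 1 ≤ N) (d : Fin N → ℝ) (hd : ∀ i, 0 < d i)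
    (B : Matrix (Fin N) (Fin N) ℝ) (hB : ∀ i j, 0 ≤ B i j) (hρ : 0 < specRad B) :
    ∃ lam : ℝ, lam ∈ Set.Ioi (0 : ℝ) ∧
      specRad ((lam ^ 2) • Matrix.diagonal d + B) / lam =
        sInf ((fun μ : ℝ => specRad ((μ ^ 2) • Matrix.diagonal d + B) / μ) '' Set.Ioi 0) ∧
      0 < specRad ((lam ^ 2) • Matrix.diagonal d + B) / lam := by
  have hD (i j : Fin N) : 0 ≤ diagonal d i j := by
    by_cases h : i = j <;> simp [h, (hd j).le]
  have hρD : 0 < specRad (diagonal d) := (hd ⟨0, hN⟩).trans_le (le_specRad_diagonal _)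
  obtain ⟨lam, hlam, hmin⟩ := exists_isMinOn_specRad_sq_smul_add_div hD hB hρD hρ
  have hleast : IsLeast ((fun μ : ℝ => specRad ((μ ^ 2) • diagonal d + B) / μ) '' Ioi 0)
      (specRad ((lam ^ 2) • diagonal d + B) / lam) :=
    ⟨mem_image_of_mem _ hlam, forall_mem_image.2 hmin⟩
  refine ⟨lam, hlam, hleast.csInf_eq.symm, div_pos ?_ hlam⟩
  exact hρ.trans_le (specRad_le_specRad_smul_add hD hB (sq_nonneg lam))
end

section
/- For every real number w > 0, (w e^{−w})² + 4 w e^{−w} − 4w < 0. -/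
theorem stmt_7 : ∀ w : ℝ, 0 < w →
    (w * Real.exp (-w)) ^ 2 + 4 * (w * Real.exp (-w)) - 4 * w < 0 := by
  intro w hw
  have h1 : w + 1 < Real.exp w := Real.add_one_lt_exp (ne_of_gt hw)
  have h2 : Real.exp (-w) * Real.exp w = 1 := by
    rw [← Real.exp_add]; simp
  have h3 : 0 < Real.exp (-w) := Real.exp_pos _
  have h4 : 0 < Real.exp w := Real.exp_pos _
  nlinarith [sq_nonneg (Real.exp (-w) * w), sq_nonneg w, mul_pos hw h3,
    mul_pos h3 hw, sq_nonneg (w * Real.exp (-w) - w / (1 + w)),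
    mul_pos (mul_pos hw hw) h3]
end

section
/- Fix real numbers d > 0, β > 0, c > 0 and set λ_1 = (−c + √(c² + 4βd))/(2d) and λ_2 = (c + √(c² + 4βd))/(2d), so that −λ_1 and λ_2 are the two roots of dλ² − cλ − β = 0. Let Λ > 0 and γ > 1 satisfy γΛ < λ_2, let ν > 0 and ν_γ > 0, set M = (β + cΛ − dΛ²)ν, and let M_γ be any real number with M_γ < (β + cγΛ − d(γΛ)²)ν_γ. Then M/((λ_1 + Λ)ν) + M/((λ_2 − Λ)ν) − M_γ/((λ_1 + γΛ)ν_γ) − M_γ/((λ_2 − γΛ)ν_γ) > 0. -/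
/-!
Writing `l₁ = (-c + √(c² + 4βd)) / (2d)` and `l₂ = (c + √(c² + 4βd)) / (2d)`, the quadratic factors
as `β + c x - d x² = d (l₁ + x) (l₂ - x)`. Hence the two `M`-terms sum exactly to
`d (l₂ - Λ) + d (l₁ + Λ) = d (l₁ + l₂)`, while the bound on `M_γ` makes each `M_γ`-term strictly
smaller than the corresponding factor at `γΛ`, so their sum is strictly below the same `d (l₁ + l₂)`.
-/

theorem quadratic_eq_mul_sub_roots {d β c s : ℝ} (hd : d ≠ 0) (hs : s ^ 2 = c ^ 2 + 4 * β * d)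
    (x : ℝ) :
    β + c * x - d * x ^ 2 = d * ((-c + s) / (2 * d) + x) * ((c + s) / (2 * d) - x) := by
  field_simp
  linear_combination (-1 : ℝ) * hs

section

variable {d l₁ l₂ : ℝ}

theorem mul_factors_div_add_mul_factors_div {x ν : ℝ} (h₁ : l₁ + x ≠ 0) (h₂ : l₂ - x ≠ 0)
    (hν : ν ≠ 0) :
    d * (l₁ + x) * (l₂ - x) * ν / ((l₁ + x) * ν) + d * (l₁ + x) * (l₂ - x) * ν / ((l₂ - x) * ν) =
      d * (l₁ + l₂) := by
  field_simp
  ring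

theorem div_factor_add_div_factor_lt {y ν M : ℝ} (h₁ : 0 < l₁ + y) (h₂ : 0 < l₂ - y) (hν : 0 < ν)
    (hM : M < d * (l₁ + y) * (l₂ - y) * ν) :
    M / ((l₁ + y) * ν) + M / ((l₂ - y) * ν) < d * (l₁ + l₂) := by
  have lt₁ : M / ((l₁ + y) * ν) < d * (l₂ - y) := by
    rw [div_lt_iff₀ (by positivity)]
    linarith
  have lt₂ : M / ((l₂ - y) * ν) < d * (l₁ + y) := by
    rw [div_lt_iff₀ (by positivity)]
    linarith
  linarith

end

theorem stmt_11_general (d β c : ℝ) (hd : 0 < d) (hβ : 0 < β)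
    (Λ γ ν νγ Mγ : ℝ) (hΛ : 0 < Λ) (hγ : 1 < γ)
    (hγΛ : γ * Λ < (c + Real.sqrt (c ^ 2 + 4 * β * d)) / (2 * d))
    (hν : 0 < ν) (hνγ : 0 < νγ)
    (hMγ : Mγ < (β + c * (γ * Λ) - d * (γ * Λ) ^ 2) * νγ) :
    let l₁ : ℝ := (-c + Real.sqrt (c ^ 2 + 4 * β * d)) / (2 * d)
    let l₂ : ℝ := (c + Real.sqrt (c ^ 2 + 4 * β * d)) / (2 * d)
    let M : ℝ := (β + c * Λ - d * Λ ^ 2) * ν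
    0 < M / ((l₁ + Λ) * ν) + M / ((l₂ - Λ) * ν)
        - Mγ / ((l₁ + γ * Λ) * νγ) - Mγ / ((l₂ - γ * Λ) * νγ) := by
  intro l₁ l₂ M
  have factor :=
    quadratic_eq_mul_sub_roots hd.ne' (Real.sq_sqrt (by positivity : 0 ≤ c ^ 2 + 4 * β * d))
  have hc_le : c ≤ √(c ^ 2 + 4 * β * d) := Real.le_sqrt_of_sq_le (by nlinarith)
  have hl₁ : 0 ≤ l₁ := div_nonneg (by linarith) (by positivity)
  have hΛ_lt : Λ < γ * Λ := by nlinarith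
  have hM_sum : M / ((l₁ + Λ) * ν) + M / ((l₂ - Λ) * ν) = d * (l₁ + l₂) := by
    simp only [M, factor]
    exact mul_factors_div_add_mul_factors_div (by linarith) (by linarith) hν.ne'
  have hMγ_sum : Mγ / ((l₁ + γ * Λ) * νγ) + Mγ / ((l₂ - γ * Λ) * νγ) < d * (l₁ + l₂) :=
    div_factor_add_div_factor_lt (by nlinarith) (by linarith) hνγ (by rwa [factor] at hMγ)
  linarith

theorem stmt_11 (d β c : ℝ) (hd : 0 < d) (hβ : 0 < β) (hc : 0 < c)
    (Λ γ ν νγ Mγ : ℝ) (hΛ : 0 < Λ) (hγ : 1 < γ)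
    (hγΛ : γ * Λ < (c + Real.sqrt (c ^ 2 + 4 * β * d)) / (2 * d))
    (hν : 0 < ν) (hνγ : 0 < νγ)
    (hMγ : Mγ < (β + c * (γ * Λ) - d * (γ * Λ) ^ 2) * νγ) :
    let l₁ : ℝ := (-c + Real.sqrt (c ^ 2 + 4 * β * d)) / (2 * d)
    let l₂ : ℝ := (c + Real.sqrt (c ^ 2 + 4 * β * d)) / (2 * d)
    let M : ℝ := (β + c * Λ - d * Λ ^ 2) * ν
    0 < M / ((l₁ + Λ) * ν) + M / ((l₂ - Λ) * ν)
        - Mγ / ((l₁ + γ * Λ) * νγ) - Mγ / ((l₂ - γ * Λ) * νγ) :=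
  stmt_11_general d β c hd hβ Λ γ ν νγ Mγ hΛ hγ hγΛ hν hνγ hMγ
end

section
/- Fix N ≥ 1, real numbers d_i > 0 (i = 1, …, N), β > 0, c > 0, and set λ_{1i} = (−c + √(c² + 4βd_i))/(2d_i) and λ_{2i} = (c + √(c² + 4βd_i))/(2d_i), so that −λ_{1i} and λ_{2i} are the two roots of d_iλ² − cλ − β = 0. Let k ∈ ℝ^N with k ≫ 0 and let f : [0, k] → ℝ^N be continuous. For continuous u : ℝ → [0, k] define T_i[u](ξ) = (1/(d_i(λ_{1i} + λ_{2i}))) (∫_{−∞}^{ξ} e^{−λ_{1i}(ξ−s)} (βu_i(s) + f_i(u(s))) ds + ∫_{ξ}^{∞} e^{λ_{2i}(ξ−s)} (βu_i(s) + f_i(u(s))) ds). If u : ℝ → [0, k] is continuous and satisfies u_i(ξ) = T_i[u](ξ) for all ξ ∈ ℝ and all i, then each u_i is twice continuously differentiable on ℝ and d_i u_i''(ξ) − c u_i'(ξ) + f_i(u(ξ)) = 0 for all ξ ∈ ℝ and all i. -/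
/-!
Fix a component `i` and put `g = β uᵢ + fᵢ ∘ u`, a bounded continuous function. The operator
splits into `L(ξ) = e^{-λ₁ξ} ∫_{-∞}^ξ e^{λ₁s} g(s) ds` and
`U(ξ) = e^{λ₂ξ} ∫_ξ^∞ e^{-λ₂s} g(s) ds`; by the fundamental theorem of calculus these satisfy
`L' = -λ₁L + g` and `U' = λ₂U - g`. Differentiating `uᵢ = (L + U) / (dᵢ(λ₁ + λ₂))` twice and
using that `-λ₁, λ₂` are the roots of `dᵢλ² - cλ - β` gives `dᵢuᵢ'' - cuᵢ' - βuᵢ = -g`,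
which is the travelling wave equation.
-/

open MeasureTheory

/-- The integral operator `T` of (4.13): componentwise,
`T_i[u](ξ) = (1/(d_i(λ₁ᵢ+λ₂ᵢ))) (∫_{-∞}^{ξ} e^{-λ₁ᵢ(ξ-s)} (βuᵢ(s)+fᵢ(u(s))) ds
             + ∫_{ξ}^{∞} e^{λ₂ᵢ(ξ-s)} (βuᵢ(s)+fᵢ(u(s))) ds)`,
where `-λ₁ᵢ, λ₂ᵢ` are the roots of `dᵢλ² - cλ - β = 0`. -/
noncomputable def Tint {N : ℕ} (d : Fin N → ℝ) (β c : ℝ)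
    (f : (Fin N → ℝ) → (Fin N → ℝ)) (u : ℝ → (Fin N → ℝ)) (i : Fin N) (ξ : ℝ) : ℝ :=
  let l₁ : ℝ := (-c + Real.sqrt (c ^ 2 + 4 * β * d i)) / (2 * d i)
  let l₂ : ℝ := (c + Real.sqrt (c ^ 2 + 4 * β * d i)) / (2 * d i)
  (1 / (d i * (l₁ + l₂))) *
    ((∫ s in Set.Iic ξ, Real.exp (-l₁ * (ξ - s)) * (β * u s i + f (u s) i)) +
     (∫ s in Set.Ici ξ, Real.exp (l₂ * (ξ - s)) * (β * u s i + f (u s) i)))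

open Set Real

section
variable {E : Type*} [NormedAddCommGroup E] [NormedSpace ℝ E]

theorem hasDerivAt_integral_Iic [CompleteSpace E] {h : ℝ → E} (hh : Continuous h)
    (hint : ∀ x, IntegrableOn h (Iic x)) (ξ : ℝ) :
    HasDerivAt (fun x => ∫ s in Iic x, h s) (h ξ) ξ := by
  have hsplit : (fun x => ∫ s in Iic x, h s) =
      fun x => (∫ s in Iic 0, h s) + ∫ s in 0..x, h s := by
    funext x
    rw [← intervalIntegral.integral_Iic_sub_Iic (hint 0) (hint x), add_sub_cancel]
  rw [hsplit]
  exact (intervalIntegral.integral_hasDerivAt_right (hh.intervalIntegrable _ _)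
    hh.stronglyMeasurable.stronglyMeasurableAtFilter hh.continuousAt).const_add _

theorem contDiff_two_of_hasDerivAt {y y' y'' : ℝ → E} (hy : ∀ x, HasDerivAt y (y' x) x)
    (hy' : ∀ x, HasDerivAt y' (y'' x) x) (hy'' : Continuous y'') : ContDiff ℝ 2 y := by
  have hderiv : deriv y = y' := funext fun x => (hy x).deriv
  have hderiv' : deriv y' = y'' := funext fun x => (hy' x).deriv
  rw [show (2 : WithTop ℕ∞) = 1 + 1 from rfl, contDiff_succ_iff_deriv, hderiv,
    contDiff_one_iff_deriv, hderiv']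
  exact ⟨fun x => (hy x).differentiableAt, by simp, fun x => (hy' x).differentiableAt, hy''⟩

end

noncomputable def expConvIic (a : ℝ) (g : ℝ → ℝ) (ξ : ℝ) : ℝ :=
  ∫ s in Iic ξ, exp (-a * (ξ - s)) * g s

noncomputable def expConvIci (b : ℝ) (g : ℝ → ℝ) (ξ : ℝ) : ℝ :=
  ∫ s in Ici ξ, exp (b * (ξ - s)) * g s

section
variable {g : ℝ → ℝ} {C : ℝ}

theorem integrableOn_exp_mul_mul_Iic {a : ℝ} (ha : 0 < a) (hg : Continuous g)
    (hgb : ∀ s, |g s| ≤ C) (x : ℝ) :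
    IntegrableOn (fun s => exp (a * s) * g s) (Iic x) :=
  (integrableOn_exp_mul_Iic ha x).mul_bdd hg.aestronglyMeasurable (ae_of_all _ hgb)

theorem expConvIic_eq (a : ℝ) (g : ℝ → ℝ) (ξ : ℝ) :
    expConvIic a g ξ = exp (-a * ξ) * ∫ s in Iic ξ, exp (a * s) * g s := by
  rw [expConvIic, ← integral_const_mul]
  congr 1 with s
  rw [← mul_assoc, ← exp_add]
  ring_nf

theorem hasDerivAt_expConvIic {a : ℝ} (ha : 0 < a) (hg : Continuous g)
    (hgb : ∀ s, |g s| ≤ C) (ξ : ℝ) :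
    HasDerivAt (expConvIic a g) (-a * expConvIic a g ξ + g ξ) ξ := by
  have hexp : HasDerivAt (fun x => exp (-a * x)) (exp (-a * ξ) * -a) ξ := by
    simpa using ((hasDerivAt_id ξ).const_mul (-a)).exp
  have hint := hasDerivAt_integral_Iic (by fun_prop) (integrableOn_exp_mul_mul_Iic ha hg hgb) ξ
  rw [funext (expConvIic_eq a g)]
  refine (hexp.mul hint).congr_deriv ?_
  rw [show exp (-a * ξ) * (exp (a * ξ) * g ξ) = g ξ by
    rw [← mul_assoc, ← exp_add, neg_mul, neg_add_cancel, exp_zero, one_mul]]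
  ring

theorem expConvIci_eq_expConvIic_neg (b : ℝ) (g : ℝ → ℝ) (ξ : ℝ) :
    expConvIci b g ξ = expConvIic b (fun s => g (-s)) (-ξ) := by
  rw [expConvIci, expConvIic, integral_Ici_eq_integral_Ioi,
    ← integral_comp_neg_Ioi]
  simp only [neg_neg]
  congr 1 with s
  ring_nf

theorem hasDerivAt_expConvIci {b : ℝ} (hb : 0 < b) (hg : Continuous g)
    (hgb : ∀ s, |g s| ≤ C) (ξ : ℝ) :
    HasDerivAt (expConvIci b g) (b * expConvIci b g ξ - g ξ) ξ := by
  have h := (hasDerivAt_expConvIic hb (hg.comp continuous_neg) (fun s => hgb (-s)) (-ξ)).comp ξ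
    (hasDerivAt_neg ξ)
  rw [funext (expConvIci_eq_expConvIic_neg b g)]
  exact h.congr_deriv (by simp only [Function.comp_def, neg_neg]; ring)

end

theorem quadratic_roots_pos_vieta {d β c r : ℝ} (hd : 0 < d) (hβ : 0 < β) (hr : 0 ≤ r)
    (hr2 : r ^ 2 = c ^ 2 + 4 * β * d) :
    0 < (-c + r) / (2 * d) ∧ 0 < (c + r) / (2 * d) ∧
      d * ((c + r) / (2 * d) - (-c + r) / (2 * d)) = c ∧
      d * ((-c + r) / (2 * d) * ((c + r) / (2 * d))) = β := by
  have habs : |c| < r := abs_lt_of_sq_lt_sq (by nlinarith) hr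
  refine ⟨div_pos (by linarith [le_abs_self c]) (by positivity),
    div_pos (by linarith [neg_abs_le c]) (by positivity), by field_simp; ring, ?_⟩
  field_simp
  linear_combination hr2

theorem contDiff_two_and_ode_of_eq_expConv {d β c a b Cy CF : ℝ} (hd : d ≠ 0) (ha : 0 < a)
    (hb : 0 < b) (hc : d * (b - a) = c) (hβ : d * (a * b) = β) {y F : ℝ → ℝ}
    (hy : Continuous y) (hF : Continuous F) (hyb : ∀ s, |y s| ≤ Cy) (hFb : ∀ s, |F s| ≤ CF)
    (hfix : ∀ ξ, y ξ = 1 / (d * (a + b)) *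
      (expConvIic a (fun s => β * y s + F s) ξ + expConvIci b (fun s => β * y s + F s) ξ)) :
    ContDiff ℝ 2 y ∧ ∀ ξ, d * deriv (deriv y) ξ - c * deriv y ξ + F ξ = 0 := by
  set g : ℝ → ℝ := fun s => β * y s + F s
  have hg : Continuous g := by fun_prop
  have hgb (s : ℝ) : |g s| ≤ |β| * Cy + CF :=
    (abs_add_le _ _).trans <| add_le_add
      (by rw [abs_mul]; exact mul_le_mul_of_nonneg_left (hyb s) (abs_nonneg β)) (hFb s)
  set κ := 1 / (d * (a + b)) with hκ_def
  have hκ : d * (a + b) * κ = 1 := by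
    rw [hκ_def]; field_simp [show d * (a + b) ≠ 0 by positivity]
  set L := expConvIic a g
  set U := expConvIci b g
  have hL := hasDerivAt_expConvIic ha hg hgb
  have hU := hasDerivAt_expConvIci hb hg hgb
  have hy' (ξ : ℝ) : HasDerivAt y (κ * (-a * L ξ + b * U ξ)) ξ := by
    rw [funext hfix]
    exact (((hL ξ).add (hU ξ)).const_mul κ).congr_deriv (by ring)
  have hy'' (ξ : ℝ) : HasDerivAt (fun ξ => κ * (-a * L ξ + b * U ξ))
      (κ * (a ^ 2 * L ξ + b ^ 2 * U ξ - (a + b) * g ξ)) ξ :=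
    ((((hL ξ).const_mul (-a)).add ((hU ξ).const_mul b)).const_mul κ).congr_deriv (by ring)
  have hLc : Continuous L := continuous_iff_continuousAt.2 fun ξ => (hL ξ).continuousAt
  have hUc : Continuous U := continuous_iff_continuousAt.2 fun ξ => (hU ξ).continuousAt
  refine ⟨contDiff_two_of_hasDerivAt hy' hy'' (by fun_prop), fun ξ => ?_⟩
  rw [funext fun ξ => (hy' ξ).deriv, (hy'' ξ).deriv]
  have hgξ : g ξ = β * y ξ + F ξ := rfl
  linear_combination κ * (-a * L ξ + b * U ξ) * hc - d * a * b * hfix ξ - g ξ * hκ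
    + y ξ * hβ - hgξ

theorem stmt_13_general (N : ℕ) (d : Fin N → ℝ) (hd : ∀ i, 0 < d i)
    (β c : ℝ) (hβ : 0 < β)
    (k : Fin N → ℝ)
    (f : (Fin N → ℝ) → (Fin N → ℝ)) (hf : ContinuousOn f (Set.Icc 0 k))
    (u : ℝ → (Fin N → ℝ)) (hu : Continuous u)
    (hrange : ∀ ξ, u ξ ∈ Set.Icc (0 : Fin N → ℝ) k)
    (hfix : ∀ i ξ, u ξ i = Tint d β c f u i ξ) :
    ∀ i, ContDiff ℝ 2 (fun ξ => u ξ i) ∧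
      ∀ ξ, d i * deriv (deriv (fun ξ => u ξ i)) ξ
            - c * deriv (fun ξ => u ξ i) ξ + f (u ξ) i = 0 := by
  intro i
  obtain ⟨ha, hb, hsum, hprod⟩ := quadratic_roots_pos_vieta (c := c) (hd i) hβ (sqrt_nonneg _)
    (sq_sqrt (by have := hd i; positivity))
  obtain ⟨C, hC⟩ := isCompact_Icc.exists_bound_of_continuousOn hf
  exact contDiff_two_and_ode_of_eq_expConv (hd i).ne' ha hb hsum hprod
    ((continuous_apply i).comp hu) ((continuous_apply i).comp (hf.comp_continuous hu hrange))
    (fun s => (abs_of_nonneg ((hrange s).1 i)).trans_le ((hrange s).2 i))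
    (fun s => (norm_le_pi_norm (f (u s)) i).trans (hC _ (hrange s))) (hfix i)

theorem stmt_13 (N : ℕ) (hN : 1 ≤ N) (d : Fin N → ℝ) (hd : ∀ i, 0 < d i)
    (β c : ℝ) (hβ : 0 < β) (hc : 0 < c)
    (k : Fin N → ℝ) (hk : ∀ i, 0 < k i)
    (f : (Fin N → ℝ) → (Fin N → ℝ)) (hf : ContinuousOn f (Set.Icc 0 k))
    (u : ℝ → (Fin N → ℝ)) (hu : Continuous u)
    (hrange : ∀ ξ, u ξ ∈ Set.Icc (0 : Fin N → ℝ) k)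
    (hfix : ∀ i ξ, u ξ i = Tint d β c f u i ξ) :
    ∀ i, ContDiff ℝ 2 (fun ξ => u ξ i) ∧
      ∀ ξ, d i * deriv (deriv (fun ξ => u ξ i)) ξ
            - c * deriv (fun ξ => u ξ i) ξ + f (u ξ) i = 0 :=
  stmt_13_general N d hd β c hβ k f hf u hu hrange hfix
end

section
/- Fix N ≥ 1, real numbers d_i > 0 (i = 1, …, N), c > 0, and set λ_{1i} = (−c + √(c² + 4βd_i))/(2d_i) and λ_{2i} = (c + √(c² + 4βd_i))/(2d_i). Let k ∈ ℝ^N with k ≫ 0, let f : [0, k] → ℝ^N be continuously differentiable with ∂_j f_i(u) ≥ 0 for all u ∈ [0, k] and all i ≠ j, and let β > max{|∂_i f_i(u)| : u ∈ [0, k], i = 1, …, N}. For continuous u : ℝ → [0, k] define T_i[u](ξ) = (1/(d_i(λ_{1i} + λ_{2i}))) (∫_{−∞}^{ξ} e^{−λ_{1i}(ξ−s)} (βu_i(s) + f_i(u(s))) ds + ∫_{ξ}^{∞} e^{λ_{2i}(ξ−s)} (βu_i(s) + f_i(u(s))) ds). Then: (a) if u, v : ℝ → [0, k] are continuous with u(ξ)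 ≥ v(ξ) componentwise for all ξ, then T_i[u](ξ) ≥ T_i[v](ξ) for all ξ and all i; (b) if u : ℝ → [0, k] is continuous and each component u_i is nondecreasing on ℝ, then each T_i[u] is nondecreasing on ℝ. -/
/-!
The reaction term `H_i(w) = β w_i + f_i(w)` is nondecreasing on the box `[0, k]`: in a direction
`v ≥ 0` its derivative is `β v_i + ∑_j ∂_j f_i v_j ≥ 0`, since the off-diagonal partials are
nonnegative and `∂_i f_i > -β` (mean value theorem in the interior, continuity up to the
boundary). `T_i[u]` integrates `H_i ∘ u` against the positive kernel `e^{-λ₁(ξ-s)}` on `s ≤ ξ`,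
`e^{λ₂(ξ-s)}` on `s ≥ ξ` (both `λ`'s are positive because `β d_i > 0`), which gives (a). The
kernel depends only on `ξ - s`, so `T_i[u](ξ + δ) = T_i[u(· + δ)](ξ)`, and (b) follows from (a)
applied to `u(· + δ) ≥ u`.
-/

open MeasureTheory

open Set

theorem mul_apply_add_apply_nonneg_of_cooperative {ι : Type*} [Fintype ι] [DecidableEq ι]
    (L : (ι → ℝ) →L[ℝ] ι → ℝ) {β : ℝ} {i : ι}
    (hoff : ∀ j, i ≠ j → 0 ≤ L (Pi.single j 1) i) (hdiag : -β ≤ L (Pi.single i 1) i)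
    {v : ι → ℝ} (hv : 0 ≤ v) : 0 ≤ β * v i + L v i := by
  have hsum : L v i = ∑ j, v j * L (Pi.single j 1) i := by
    conv_lhs => rw [← Finset.univ_sum_single v]
    simp only [map_sum, Finset.sum_apply]
    refine Finset.sum_congr rfl fun j _ => ?_
    rw [← smul_eq_mul, ← Pi.smul_apply, ← map_smul, ← Pi.single_smul, smul_eq_mul, mul_one]
  rw [hsum, ← Finset.add_sum_erase _ _ (Finset.mem_univ i)]
  have hrest : 0 ≤ ∑ j ∈ Finset.univ.erase i, v j * L (Pi.single j 1) i :=
    Finset.sum_nonneg fun j hj => mul_nonneg (hv j) (hoff j (Finset.ne_of_mem_erase hj).symm)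
  have hdiag' : 0 ≤ v i * (β + L (Pi.single i 1) i) := mul_nonneg (hv i) (by linarith)
  linarith

theorem monotoneOn_of_hasFDerivWithinAt_nonneg {E : Type*} [NormedAddCommGroup E]
    [NormedSpace ℝ E] [PartialOrder E] [IsOrderedAddMonoid E] {s : Set E} {g : E → ℝ}
    {g' : E → StrongDual ℝ E} (hs : Convex ℝ s) (hg : ∀ x ∈ s, HasFDerivWithinAt g (g' x) s x)
    (hg' : ∀ x ∈ s, ∀ v, 0 ≤ v → 0 ≤ g' x v) : MonotoneOn g s := by
  intro x hx y hy hxy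
  obtain ⟨z, hz, hgxy⟩ := domain_mvt hg hs hx hy
  have := hg' z (hs.segment_subset hx hy hz) (y - x) (sub_nonneg.2 hxy)
  linarith

-- Contract `x ≤ y` towards `z`: `lineMap x z t ≤ lineMap y z t` are interior for `t ∈ (0, 1]`.
theorem Convex.monotoneOn_of_monotoneOn_interior {E : Type*} [AddCommGroup E] [PartialOrder E]
    [IsOrderedAddMonoid E] [Module ℝ E] [PosSMulMono ℝ E] [TopologicalSpace E]
    [IsTopologicalAddGroup E] [ContinuousSMul ℝ E]
    {α : Type*} [TopologicalSpace α] [Preorder α] [OrderClosedTopology α]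
    {s : Set E} {z : E} {g : E → α} (hs : Convex ℝ s) (hz : z ∈ interior s)
    (hg : ContinuousOn g s) (hmono : MonotoneOn g (interior s)) : MonotoneOn g s := by
  have hpath : ∀ w ∈ s, ∀ t ∈ Ioc (0 : ℝ) 1, AffineMap.lineMap w z t ∈ interior s :=
    fun w hw t ht => by
      rw [AffineMap.lineMap_apply_module]
      exact hs.combo_self_interior_mem_interior hw hz (sub_nonneg.2 ht.2) ht.1 (by ring)
  have hcont : ∀ w ∈ s,
      ContinuousWithinAt (fun t : ℝ => g (AffineMap.lineMap w z t)) (Ioc 0 1) 0 :=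
    fun w hw => (hg w hw).comp_of_eq AffineMap.lineMap_continuous.continuousWithinAt
      (fun t ht => interior_subset (hpath w hw t ht)) (AffineMap.lineMap_apply_zero w z)
  intro x hx y hy hxy
  have hle := ContinuousWithinAt.closure_le (by simp [closure_Ioc]) (hcont x hx) (hcont y hy)
    fun t ht => hmono (hpath x hx t ht) (hpath y hy t ht) ?_
  · simpa using hle
  · rw [AffineMap.lineMap_apply_module, AffineMap.lineMap_apply_module]
    gcongr
    exact sub_nonneg.2 ht.2

-- `fderiv ℝ f u` is only meaningful where `f` is differentiable, hence the hypotheses on the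
-- interior; the closure is reached by continuity.
theorem Convex.monotoneOn_mul_apply_add_apply_of_cooperative {ι : Type*} [Fintype ι]
    [DecidableEq ι] {s : Set (ι → ℝ)} {z : ι → ℝ} (hs : Convex ℝ s) (hz : z ∈ interior s)
    {f : (ι → ℝ) → ι → ℝ} (hfc : ContinuousOn f s) (hfd : DifferentiableOn ℝ f (interior s))
    {β : ℝ} (hcoop : ∀ u ∈ interior s, ∀ i j, i ≠ j → 0 ≤ fderiv ℝ f u (Pi.single j 1) i)
    (hdiag : ∀ u ∈ interior s, ∀ i, -β ≤ fderiv ℝ f u (Pi.single i 1) i) (i : ι) :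
    MonotoneOn (fun w => β * w i + f w i) s := by
  refine hs.monotoneOn_of_monotoneOn_interior hz
    ((continuousOn_const.mul (continuous_apply i).continuousOn).add
      ((continuous_apply i).comp_continuousOn hfc)) ?_
  refine monotoneOn_of_hasFDerivWithinAt_nonneg hs.interior
    (g' := fun u => β • ContinuousLinearMap.proj i +
      (ContinuousLinearMap.proj i).comp (fderiv ℝ f u))
    (fun u hu => ?_) fun u hu v hv => ?_
  · have hf := (hfd.differentiableAt (isOpen_interior.mem_nhds hu)).hasFDerivAt
    exact (((hasFDerivAt_apply i u).const_mul β).add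
      ((hasFDerivAt_apply i _).comp u hf)).hasFDerivWithinAt
  · simpa using
      mul_apply_add_apply_nonneg_of_cooperative (fderiv ℝ f u) (hcoop u hu i) (hdiag u hu i) hv

noncomputable def twoSidedExpConv (a b : ℝ) (h : ℝ → ℝ) (ξ : ℝ) : ℝ :=
  (∫ s in Iic ξ, Real.exp (-a * (ξ - s)) * h s) + ∫ s in Ici ξ, Real.exp (b * (ξ - s)) * h s

section TwoSidedExpConv

variable {a b M : ℝ} {h : ℝ → ℝ}

theorem integrableOn_exp_mul_sub_mul_Iic (ha : 0 < a) (hh : Continuous h)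
    (hM : ∀ s, |h s| ≤ M) (ξ : ℝ) :
    IntegrableOn (fun s => Real.exp (-a * (ξ - s)) * h s) (Iic ξ) := by
  have hexp : IntegrableOn (fun s => Real.exp (-a * (ξ - s))) (Iic ξ) := by
    have := (integrableOn_exp_mul_Iic ha ξ).mul_const (Real.exp (-a * ξ))
    refine IntegrableOn.congr_fun this (fun s _ => ?_) measurableSet_Iic
    rw [← Real.exp_add]; ring_nf
  exact hexp.mul_bdd hh.aestronglyMeasurable (ae_of_all _ hM)

theorem integrableOn_exp_mul_sub_mul_Ici (hb : 0 < b) (hh : Continuous h)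
    (hM : ∀ s, |h s| ≤ M) (ξ : ℝ) :
    IntegrableOn (fun s => Real.exp (b * (ξ - s)) * h s) (Ici ξ) := by
  have hexp : IntegrableOn (fun s => Real.exp (b * (ξ - s))) (Ici ξ) := by
    have := (integrableOn_exp_mul_Ioi (neg_lt_zero.2 hb) ξ).mul_const (Real.exp (b * ξ))
    rw [integrableOn_Ici_iff_integrableOn_Ioi]
    refine IntegrableOn.congr_fun this (fun s _ => ?_) measurableSet_Ioi
    rw [← Real.exp_add]; ring_nf
  exact hexp.mul_bdd hh.aestronglyMeasurable (ae_of_all _ hM)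

theorem twoSidedExpConv_mono (ha : 0 < a) (hb : 0 < b) {h₁ h₂ : ℝ → ℝ}
    (hh₁ : Continuous h₁) (hh₂ : Continuous h₂) (hM₁ : ∀ s, |h₁ s| ≤ M)
    (hM₂ : ∀ s, |h₂ s| ≤ M) (h₁₂ : h₁ ≤ h₂) (ξ : ℝ) :
    twoSidedExpConv a b h₁ ξ ≤ twoSidedExpConv a b h₂ ξ := by
  have hkernel : ∀ (e : ℝ) s, Real.exp e * h₁ s ≤ Real.exp e * h₂ s := fun e s =>
    mul_le_mul_of_nonneg_left (h₁₂ s) (Real.exp_pos e).le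
  exact add_le_add
    (setIntegral_mono_on (integrableOn_exp_mul_sub_mul_Iic ha hh₁ hM₁ ξ)
      (integrableOn_exp_mul_sub_mul_Iic ha hh₂ hM₂ ξ) measurableSet_Iic fun s _ => hkernel _ s)
    (setIntegral_mono_on (integrableOn_exp_mul_sub_mul_Ici hb hh₁ hM₁ ξ)
      (integrableOn_exp_mul_sub_mul_Ici hb hh₂ hM₂ ξ) measurableSet_Ici fun s _ => hkernel _ s)

theorem setIntegral_comp_add_right {E : Type*} [NormedAddCommGroup E] [NormedSpace ℝ E]
    (F : ℝ → E) (δ : ℝ) (S : Set ℝ) :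
    ∫ s in (· + δ) ⁻¹' S, F (s + δ) = ∫ s in S, F s :=
  (measurePreserving_add_right volume δ).setIntegral_preimage_emb
    (measurableEmbedding_addRight δ) F S

theorem twoSidedExpConv_comp_add_right (ξ δ : ℝ) :
    twoSidedExpConv a b (fun s => h (s + δ)) ξ = twoSidedExpConv a b h (ξ + δ) := by
  have hshift : ∀ s, ξ + δ - (s + δ) = ξ - s := fun s => by ring
  unfold twoSidedExpConv
  rw [← setIntegral_comp_add_right _ δ (Iic (ξ + δ)),
    ← setIntegral_comp_add_right _ δ (Ici (ξ + δ))]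
  simp only [preimage_add_const_Iic, preimage_add_const_Ici, add_sub_cancel_right, hshift]

theorem monotone_twoSidedExpConv (ha : 0 < a) (hb : 0 < b) (hh : Continuous h)
    (hM : ∀ s, |h s| ≤ M) (hmono : Monotone h) : Monotone (twoSidedExpConv a b h) := by
  intro ξ ξ' hξ
  obtain ⟨δ, hδ, rfl⟩ : ∃ δ, 0 ≤ δ ∧ ξ' = ξ + δ := ⟨ξ' - ξ, by linarith, by ring⟩
  rw [← twoSidedExpConv_comp_add_right]
  exact twoSidedExpConv_mono ha hb hh (hh.comp (continuous_add_const δ)) hM (fun s => hM _)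
    (fun s => hmono (by linarith)) ξ

end TwoSidedExpConv

theorem add_sqrt_sq_add_div_pos (c : ℝ) {β d : ℝ} (hβ : 0 < β) (hd : 0 < d) :
    0 < (c + √(c ^ 2 + 4 * β * d)) / (2 * d) := by
  have : |c| < √(c ^ 2 + 4 * β * d) := by
    rw [← Real.sqrt_sq_eq_abs]
    exact Real.sqrt_lt_sqrt (sq_nonneg _) (by nlinarith [mul_pos hβ hd])
  exact div_pos (by linarith [neg_abs_le c]) (by linarith)

theorem stmt_16_general (N : ℕ) (hN : 1 ≤ N) (d : Fin N → ℝ) (hd : ∀ i, 0 < d i)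
    (c β : ℝ)
    (k : Fin N → ℝ) (hk : ∀ i, 0 < k i)
    (f : (Fin N → ℝ) → (Fin N → ℝ)) (hf : ContDiffOn ℝ 1 f (Set.Icc 0 k))
    (hcoop : ∀ u ∈ Set.Icc (0 : Fin N → ℝ) k, ∀ i j, i ≠ j →
      0 ≤ fderiv ℝ f u (Pi.single j 1) i)
    (hβ : ∀ u ∈ Set.Icc (0 : Fin N → ℝ) k, ∀ i,
      |fderiv ℝ f u (Pi.single i 1) i| < β) :
    (∀ u v : ℝ → (Fin N → ℝ), Continuous u → Continuous v →
      (∀ ξ, u ξ ∈ Set.Icc (0 : Fin N → ℝ) k) →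
      (∀ ξ, v ξ ∈ Set.Icc (0 : Fin N → ℝ) k) →
      (∀ ξ i, v ξ i ≤ u ξ i) →
      ∀ i ξ, Tint d β c f v i ξ ≤ Tint d β c f u i ξ) ∧
    (∀ u : ℝ → (Fin N → ℝ), Continuous u →
      (∀ ξ, u ξ ∈ Set.Icc (0 : Fin N → ℝ) k) →
      (∀ i, Monotone fun ξ => u ξ i) →
      ∀ i, Monotone fun ξ => Tint d β c f u i ξ) := by
  have hβ0 : 0 < β := (abs_nonneg _).trans_lt (hβ 0 ⟨le_rfl, fun j => (hk j).le⟩ ⟨0, hN⟩)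
  have hHcont : ∀ i, ContinuousOn (fun w => β * w i + f w i) (Icc 0 k) := fun i =>
    (continuousOn_const.mul (continuous_apply i).continuousOn).add
      ((continuous_apply i).comp_continuousOn hf.continuousOn)
  have hHmono : ∀ i, MonotoneOn (fun w => β * w i + f w i) (Icc 0 k) :=
    (convex_Icc 0 k).monotoneOn_mul_apply_add_apply_of_cooperative
      (mem_interior_iff_mem_nhds.2 (pi_Icc_mem_nhds (x := k / 2) (fun i => by simp [hk i])
        (fun i => by simp [hk i])))
      hf.continuousOn ((hf.differentiableOn one_ne_zero).mono interior_subset)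
      (fun u hu => hcoop u (interior_subset hu))
      (fun u hu i => (neg_lt_of_abs_lt (hβ u (interior_subset hu) i)).le)
  have hHbound : ∀ i, ∃ M, ∀ w ∈ Icc 0 k, |β * w i + f w i| ≤ M := fun i =>
    isCompact_Icc.exists_bound_of_continuousOn (hHcont i)
  have hl₁ : ∀ i, 0 < (-c + √(c ^ 2 + 4 * β * d i)) / (2 * d i) := fun i => by
    simpa [neg_sq] using add_sqrt_sq_add_div_pos (-c) hβ0 (hd i)
  have hl₂ : ∀ i, 0 < (c + √(c ^ 2 + 4 * β * d i)) / (2 * d i) := fun i =>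
    add_sqrt_sq_add_div_pos c hβ0 (hd i)
  have hpref : ∀ i, 0 ≤ 1 / (d i * ((-c + √(c ^ 2 + 4 * β * d i)) / (2 * d i) +
      (c + √(c ^ 2 + 4 * β * d i)) / (2 * d i))) := fun i => by
    have := hd i; have := hl₁ i; have := hl₂ i; positivity
  -- `Tint d β c f u i` unfolds to the prefactor times
  -- `twoSidedExpConv λ₁ λ₂ (fun s => β * u s i + f (u s) i)`.
  refine ⟨fun u v hu hv hu_mem hv_mem hvu i ξ => ?_, fun u hu hu_mem hu_mono i => ?_⟩
  · obtain ⟨M, hM⟩ := hHbound i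
    exact mul_le_mul_of_nonneg_left (twoSidedExpConv_mono (hl₁ i) (hl₂ i)
      ((hHcont i).comp_continuous hv hv_mem) ((hHcont i).comp_continuous hu hu_mem)
      (fun s => hM _ (hv_mem s)) (fun s => hM _ (hu_mem s))
      (fun s => hHmono i (hv_mem s) (hu_mem s) (hvu s)) ξ) (hpref i)
  · obtain ⟨M, hM⟩ := hHbound i
    exact (monotone_twoSidedExpConv (hl₁ i) (hl₂ i) ((hHcont i).comp_continuous hu hu_mem)
      (fun s => hM _ (hu_mem s))
      (fun s t hst => hHmono i (hu_mem s) (hu_mem t) fun j => hu_mono j hst)).const_mul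
      (hpref i)

theorem stmt_16 (N : ℕ) (hN : 1 ≤ N) (d : Fin N → ℝ) (hd : ∀ i, 0 < d i)
    (c β : ℝ) (hc : 0 < c)
    (k : Fin N → ℝ) (hk : ∀ i, 0 < k i)
    (f : (Fin N → ℝ) → (Fin N → ℝ)) (hf : ContDiffOn ℝ 1 f (Set.Icc 0 k))
    (hcoop : ∀ u ∈ Set.Icc (0 : Fin N → ℝ) k, ∀ i j, i ≠ j →
      0 ≤ fderiv ℝ f u (Pi.single j 1) i)
    (hβ : ∀ u ∈ Set.Icc (0 : Fin N → ℝ) k, ∀ i,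
      |fderiv ℝ f u (Pi.single i 1) i| < β) :
    (∀ u v : ℝ → (Fin N → ℝ), Continuous u → Continuous v →
      (∀ ξ, u ξ ∈ Set.Icc (0 : Fin N → ℝ) k) →
      (∀ ξ, v ξ ∈ Set.Icc (0 : Fin N → ℝ) k) →
      (∀ ξ i, v ξ i ≤ u ξ i) →
      ∀ i ξ, Tint d β c f v i ξ ≤ Tint d β c f u i ξ) ∧
    (∀ u : ℝ → (Fin N → ℝ), Continuous u →
      (∀ ξ, u ξ ∈ Set.Icc (0 : Fin N → ℝ) k) →
      (∀ i, Monotone fun ξ => u ξ i) →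
      ∀ i, Monotone fun ξ => Tint d β c f u i ξ) :=
  stmt_16_general N hN d hd c β k hk f hf hcoop hβ
end
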